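/- The number of n₁×n₂ lonesum matrices equals ∑_{j=0}^{min(n₁,n₂)} (j!)² · S(n₁+1,j+1) · S(n₂+1,j+1), where S denotes the Stirling numbers of the second kind. -/

import Mathlib

/-- An orientation of a simple graph `G`, encoded as a function `f` where `f u v = true`
means the edge `{u,v}` is directed from `u` to `v`. Every edge gets exactly one direction,
and non-edges carry no direction. -/
def IsOrientation {V : Type*} (G : SimpleGraph V) (f : V → V → Bool) : Prop :=
  (∀ u v, G.Adj u v → f u v = !f v u) ∧ ∀ u v, ¬ G.Adj u v → f u v = false

/-- The directed graph given by `f` contains no directed cycle. -/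
def OrientAcyclic {V : Type*} (f : V → V → Bool) : Prop :=
  ∀ v, ¬ Relation.TransGen (fun a b => f a b = true) v v

/-- The number of acyclic orientations of `G`. -/
noncomputable def numAcyclicOrientations {V : Type*} (G : SimpleGraph V) : ℕ :=
  Nat.card {f : V → V → Bool // IsOrientation G f ∧ OrientAcyclic f}

/-- The Stirling number of the second kind `S(n,k)`: the number of partitions of an
`n`-element set into `k` non-empty parts. -/
noncomputable def stirling2 (n k : ℕ) : ℕ :=
  Nat.card {P : Finpartition (Finset.univ : Finset (Fin n)) // P.parts.card = k}

/-- The row sum of a zero-one (Boolean) matrix: the number of `true` entries in row `i`. -/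
def rowSum {m n : ℕ} (M : Fin m → Fin n → Bool) (i : Fin m) : ℕ :=
  (Finset.univ.filter fun j => M i j = true).card

/-- The column sum of a zero-one (Boolean) matrix: the number of `true` entries in column `j`. -/
def colSum {m n : ℕ} (M : Fin m → Fin n → Bool) (j : Fin n) : ℕ :=
  (Finset.univ.filter fun i => M i j = true).card

/-- A zero-one matrix is lonesum if it is the unique zero-one matrix with its row sums and
column sums. -/
def IsLonesum {m n : ℕ} (M : Fin m → Fin n → Bool) : Prop :=
  ∀ N : Fin m → Fin n → Bool,
    (∀ i, rowSum N i = rowSum M i) → (∀ j, colSum N j = colSum M j) → N = M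

/-! Switching a `2 × 2` submatrix `[[1,0],[0,1]]` preserves all line sums, so the rows of a
lonesum matrix have supports forming a chain. If `k` is the number of distinct nonempty row
supports, `f i` the number of them contained in row `i` and `g c` the number of them containing
column `c`, then `M i c = 1 ↔ k < f i + g c`, and `f`, `g` take every value in `1, …, k`.
Conversely such a threshold matrix is lonesum, because the potential `f i + g c - k - 1/2`
is positive exactly on its ones, and it gives back `k`, `f` and `g`. Hence the lonesum matrices
with `k = j` correspond to pairs of maps into `{0, …, j}` hitting every nonzero value; extending
such a map on `Fin n` by `n ↦ 0` gives the surjections `Fin (n + 1) → Fin (j + 1)` with `n ↦ 0`,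
and there are `j! S(n + 1, j + 1)` of these. -/

open Finset Function

theorem card_equiv_apply_eq {γ β : Type*} [Fintype γ] [DecidableEq γ] [Fintype β] [DecidableEq β]
    (c₀ : γ) (b₀ : β) (h : Fintype.card γ = Fintype.card β) :
    Nat.card {e : γ ≃ β // e c₀ = b₀} = (Fintype.card β - 1).factorial := by
  have e₁ : {e : γ ≃ β // e c₀ = b₀} ≃ {e : Option {c // c ≠ c₀} ≃ β // e none = b₀} :=
    ((Equiv.optionSubtypeNe c₀).symm.equivCongr (Equiv.refl β)).subtypeEquiv (by simp)
  have hcard : Fintype.card {c // c ≠ c₀} = Fintype.card {b // b ≠ b₀} := by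
    simp [Fintype.card_subtype_compl, h]
  rw [Nat.card_congr (e₁.trans (Equiv.optionSubtype b₀)), Nat.card_eq_fintype_card,
    Fintype.card_equiv (Fintype.equivOfCardEq hcard)]
  simp [Fintype.card_subtype_compl, h]

namespace Finpartition

variable {α β : Type*} [Fintype α] [DecidableEq α]

def partOf (P : Finpartition (univ : Finset α)) (a : α) : P.parts :=
  ⟨P.part a, P.part_mem.2 (mem_univ a)⟩

variable (P : Finpartition (univ : Finset α))

theorem partOf_surjective : Surjective P.partOf := by
  rintro ⟨p, hp⟩
  obtain ⟨a, -, rfl⟩ := P.part_surjOn hp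
  exact ⟨a, rfl⟩

theorem partOf_eq_partOf_iff {a b : α} : P.partOf a = P.partOf b ↔ b ∈ P.part a :=
  Subtype.ext_iff.trans
    (eq_comm.trans (P.mem_part_iff_part_eq_part (mem_univ b) (mem_univ a)).symm)

theorem ext_part {Q : Finpartition (univ : Finset α)} (h : ∀ a, P.part a = Q.part a) :
    P = Q := by
  ext p
  constructor <;> intro hp
  · obtain ⟨a, -, rfl⟩ := P.part_surjOn hp
    exact h a ▸ Q.part_mem.2 (mem_univ a)
  · obtain ⟨a, -, rfl⟩ := Q.part_surjOn hp
    exact (h a).symm ▸ P.part_mem.2 (mem_univ a)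

theorem eq_of_equiv_comp_partOf_eq {Q : Finpartition (univ : Finset α)} (e : P.parts ≃ β)
    (e' : Q.parts ≃ β) (h : ∀ a, e (P.partOf a) = e' (Q.partOf a)) : P = Q :=
  P.ext_part fun a => by
    ext b
    rw [← P.partOf_eq_partOf_iff, ← Q.partOf_eq_partOf_iff, ← e.apply_eq_iff_eq, h, h,
      e'.apply_eq_iff_eq]

theorem exists_equiv_partOf {g : α → β} (hg : Surjective g)
    (hP : ∀ a b, b ∈ P.part a ↔ g a = g b) : ∃ e : P.parts ≃ β, ∀ a, e (P.partOf a) = g a := by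
  have hφ : Bijective (P.partOf ∘ surjInv hg) := by
    refine ⟨fun t t' h => ?_, fun p => ?_⟩
    · rw [comp_apply, comp_apply, partOf_eq_partOf_iff, hP] at h
      rwa [surjInv_eq hg, surjInv_eq hg] at h
    · obtain ⟨a, rfl⟩ := P.partOf_surjective p
      refine ⟨g a, (P.partOf_eq_partOf_iff).2 ((hP _ _).2 ?_)⟩
      rw [surjInv_eq hg]
  refine ⟨(Equiv.ofBijective _ hφ).symm, fun a => ?_⟩
  rw [Equiv.symm_apply_eq, Equiv.ofBijective_apply, comp_apply, partOf_eq_partOf_iff, hP,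
    surjInv_eq hg]

end Finpartition

theorem card_surjective_apply_eq {α β : Type*} [Fintype α] [DecidableEq α] [Fintype β]
    [DecidableEq β] (a₀ : α) (b₀ : β) :
    Nat.card {g : α → β // Surjective g ∧ g a₀ = b₀} =
      (Fintype.card β - 1).factorial *
        Nat.card {P : Finpartition (univ : Finset α) // #P.parts = Fintype.card β} := by
  let labelled := Σ P : {P : Finpartition (univ : Finset α) // #P.parts = Fintype.card β},
    {e : P.1.parts ≃ β // e (P.1.partOf a₀) = b₀}
  let label (x : labelled) : {g : α → β // Surjective g ∧ g a₀ = b₀} :=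
    ⟨x.2.1 ∘ x.1.1.partOf, x.2.1.surjective.comp x.1.1.partOf_surjective, x.2.2⟩
  have hlabel : Bijective label := by
    refine ⟨?_, fun ⟨g, hg, hg₀⟩ => ?_⟩
    · rintro ⟨⟨P, hP⟩, e, he⟩ ⟨⟨Q, hQ⟩, e', he'⟩ h
      have h' : ∀ a, e (P.partOf a) = e' (Q.partOf a) := congrFun (congrArg Subtype.val h)
      obtain rfl : P = Q := P.eq_of_equiv_comp_partOf_eq e e' h'
      obtain rfl : e = e' := Equiv.ext fun p => by
        obtain ⟨a, rfl⟩ := P.partOf_surjective p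
        exact h' a
      rfl
    · let P := Finpartition.ofSetoid (Setoid.ker g)
      obtain ⟨e, he⟩ := P.exists_equiv_partOf hg fun a b => Finpartition.mem_part_ofSetoid_iff_rel
      have hP : #P.parts = Fintype.card β := by
        rw [← Fintype.card_coe, Fintype.card_congr e]
      exact ⟨⟨⟨P, hP⟩, e, (he a₀).trans hg₀⟩, Subtype.ext (funext he)⟩
  rw [← Nat.card_eq_of_bijective label hlabel, Nat.card_eq_fintype_card, Fintype.card_sigma,
    Finset.sum_congr rfl fun P _ => Nat.card_eq_fintype_card.symm.trans
      (card_equiv_apply_eq _ b₀ ((Fintype.card_coe _).trans P.2)),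
    sum_const, card_univ, smul_eq_mul, mul_comm, Nat.card_eq_fintype_card]

theorem Fin.surjective_snoc_iff {n : ℕ} {β : Type*} (f : Fin n → β) (x : β) :
    Surjective (Fin.snoc f x : Fin (n + 1) → β) ↔ ∀ t, t ≠ x → t ∈ Set.range f := by
  rw [← Set.range_eq_univ, Fin.range_snoc, Set.eq_univ_iff_forall]
  exact forall_congr' fun t => or_iff_not_imp_left

theorem Icc_subset_range_val_iff {α : Type*} {j : ℕ} (F : α → Fin (j + 1)) :
    Set.Icc 1 j ⊆ Set.range (fun a => (F a : ℕ)) ↔ ∀ t, t ≠ 0 → t ∈ Set.range F := by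
  constructor
  · intro h t ht
    obtain ⟨a, ha⟩ := h ⟨Nat.one_le_iff_ne_zero.2 (Fin.val_ne_zero_iff.2 ht), Fin.is_le t⟩
    exact ⟨a, Fin.ext ha⟩
  · rintro h t ⟨h₁, h₂⟩
    obtain ⟨a, ha⟩ := h ⟨t, by omega⟩ (by simp [Fin.ext_iff]; omega)
    exact ⟨a, congrArg Fin.val ha⟩

theorem card_forall_ne_zero_mem_range (n j : ℕ) :
    Nat.card {f : Fin n → Fin (j + 1) // ∀ t, t ≠ 0 → t ∈ Set.range f} =
      j.factorial * stirling2 (n + 1) (j + 1) := by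
  have e : {f : Fin n → Fin (j + 1) // ∀ t, t ≠ 0 → t ∈ Set.range f} ≃
      {g : Fin (n + 1) → Fin (j + 1) // Surjective g ∧ g (Fin.last n) = 0} :=
    { toFun f := ⟨Fin.snoc f.1 0, (Fin.surjective_snoc_iff _ _).2 f.2, Fin.snoc_last _ _⟩
      invFun g := ⟨Fin.init g.1, (Fin.surjective_snoc_iff _ _).1 <| by
        have h := g.2.1; rwa [← Fin.snoc_init_self g.1, g.2.2] at h⟩
      left_inv f := Subtype.ext (Fin.init_snoc (α := fun _ => Fin (j + 1)) _ _)
      right_inv g := Subtype.ext (by simpa only [g.2.2] using Fin.snoc_init_self g.1) }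
  rw [Nat.card_congr e, card_surjective_apply_eq, Fintype.card_fin, Nat.add_sub_cancel, stirling2]

theorem Finset.image_card_filter_le_eq_Icc {α : Type*} [PartialOrder α]
    [DecidableRel (α := α) (· ≤ ·)] {s : Finset α} (hs : IsChain (· ≤ ·) (s : Set α)) :
    s.image (fun x => #(s.filter (· ≤ x))) = Icc 1 #s := by
  have hlt : ∀ x ∈ s, ∀ y ∈ s, x < y → #(s.filter (· ≤ x)) < #(s.filter (· ≤ y)) :=
    fun x _ y hy hxy => card_lt_card <| ssubset_iff_of_subset
      (fun z hz => mem_filter.2 ⟨(mem_filter.1 hz).1, (mem_filter.1 hz).2.trans hxy.le⟩) |>.2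
      ⟨y, mem_filter.2 ⟨hy, le_rfl⟩, fun h => (mem_filter.1 h).2.not_gt hxy⟩
  have hinj : Set.InjOn (fun x => #(s.filter (· ≤ x))) s := by
    intro x hx y hy h
    by_contra hne
    rcases hs.total hx hy with hxy | hxy
    · exact (hlt x hx y hy (hxy.lt_of_ne hne)).ne h
    · exact (hlt y hy x hx (hxy.lt_of_ne (Ne.symm hne))).ne' h
  refine eq_of_subset_of_card_le (fun t ht => ?_) ?_
  · obtain ⟨x, hx, rfl⟩ := mem_image.1 ht
    exact mem_Icc.2 ⟨card_pos.2 ⟨x, mem_filter.2 ⟨hx, le_rfl⟩⟩, card_filter_le _ _⟩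
  · rw [card_image_of_injOn hinj, Nat.card_Icc, Nat.add_sub_cancel]

theorem le_card_of_Icc_subset_range {α : Type*} [Fintype α] {f : α → ℕ} {k : ℕ}
    (h : Set.Icc 1 k ⊆ Set.range f) : k ≤ Fintype.card α := by
  simpa using card_le_card_of_surjOn f (s := univ) (t := Icc 1 k) (by simpa [Set.SurjOn] using h)

def rowSupport {ι κ : Type*} [Fintype κ] (M : ι → κ → Bool) (i : ι) : Finset κ :=
  univ.filter fun c => M i c = true

theorem mem_rowSupport {ι κ : Type*} [Fintype κ] {M : ι → κ → Bool} {i : ι} {c : κ} :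
    c ∈ rowSupport M i ↔ M i c = true := by
  simp [rowSupport]

def threshold {ι κ : Type*} (k : ℕ) (f : ι → ℕ) (g : κ → ℕ) : ι → κ → Bool :=
  fun i c => decide (k < f i + g c)

def thresholdSupport {κ : Type*} [Fintype κ] (k : ℕ) (g : κ → ℕ) (s : ℕ) : Finset κ :=
  univ.filter fun c => k < s + g c

theorem rowSupport_threshold {ι κ : Type*} [Fintype κ] (k : ℕ) (f : ι → ℕ) (g : κ → ℕ) (i : ι) :
    rowSupport (threshold k f g) i = thresholdSupport k g (f i) := by
  ext c
  simp [rowSupport, threshold, thresholdSupport]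

section ThresholdSupport

variable {κ : Type*} [Fintype κ] {k : ℕ} {g : κ → ℕ}

theorem thresholdSupport_zero (hg : ∀ c, g c ≤ k) : thresholdSupport k g 0 = ∅ :=
  filter_false_of_mem fun c _ => by simpa using hg c

theorem strictMonoOn_thresholdSupport (hg : Set.Icc 1 k ⊆ Set.range g) :
    StrictMonoOn (thresholdSupport k g) (Set.Iic k) := by
  intro s _ s' hs' hss'
  rw [Set.mem_Iic] at hs'
  obtain ⟨c, hc⟩ := hg (⟨by omega, by omega⟩ : k + 1 - s' ∈ Set.Icc 1 k)
  refine (ssubset_iff_of_subset fun d hd => ?_).2 ⟨c, ?_, ?_⟩ <;>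
    simp only [thresholdSupport, mem_filter, mem_univ, true_and] at * <;> omega

end ThresholdSupport

section BoolMatrix

variable {ι κ : Type*} [Fintype ι] [Fintype κ] [DecidableEq κ]

def nonemptyRowSupports (M : ι → κ → Bool) : Finset (Finset κ) :=
  (univ.image (rowSupport M)).erase ∅

def rowRank (M : ι → κ → Bool) (i : ι) : ℕ :=
  #((nonemptyRowSupports M).filter (· ⊆ rowSupport M i))

def colRank (M : ι → κ → Bool) (c : κ) : ℕ := #((nonemptyRowSupports M).filter (c ∈ ·))

variable {M : ι → κ → Bool}

theorem mem_nonemptyRowSupports {S : Finset κ} :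
    S ∈ nonemptyRowSupports M ↔ S ≠ ∅ ∧ ∃ i, rowSupport M i = S := by
  simp [nonemptyRowSupports]

theorem rowRank_le (i : ι) : rowRank M i ≤ #(nonemptyRowSupports M) := card_filter_le _ _

theorem colRank_le (c : κ) : colRank M c ≤ #(nonemptyRowSupports M) := card_filter_le _ _

theorem apply_eq_true_iff_lt_rowRank_add_colRank
    (hM : IsChain (· ⊆ ·) (Set.range (rowSupport M))) (i : ι) (c : κ) :
    M i c = true ↔ #(nonemptyRowSupports M) < rowRank M i + colRank M c := by
  rw [rowRank, colRank, ← card_union_add_card_inter, ← filter_or, ← filter_and]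
  constructor
  · intro hic
    have hi : rowSupport M i ∈ nonemptyRowSupports M :=
      mem_nonemptyRowSupports.2 ⟨ne_empty_of_mem (mem_rowSupport.2 hic), i, rfl⟩
    have hall : (nonemptyRowSupports M).filter (fun T => T ⊆ rowSupport M i ∨ c ∈ T) =
        nonemptyRowSupports M := by
      refine filter_true_of_mem fun T hT => ?_
      obtain ⟨-, i', rfl⟩ := mem_nonemptyRowSupports.1 hT
      exact (hM.total ⟨i', rfl⟩ ⟨i, rfl⟩).imp_right fun h => h (mem_rowSupport.2 hic)
    rw [hall, Nat.lt_add_right_iff_pos, card_pos]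
    exact ⟨_, mem_filter.2 ⟨hi, subset_rfl, mem_rowSupport.2 hic⟩⟩
  · intro h
    by_contra hic
    have hnone : (nonemptyRowSupports M).filter (fun T => T ⊆ rowSupport M i ∧ c ∈ T) = ∅ :=
      filter_false_of_mem fun T _ hT => hic (mem_rowSupport.1 (hT.1 hT.2))
    rw [hnone, card_empty, add_zero] at h
    exact (card_filter_le _ _).not_gt h

theorem threshold_rowRank_colRank (hM : IsChain (· ⊆ ·) (Set.range (rowSupport M))) :
    threshold #(nonemptyRowSupports M) (rowRank M) (colRank M) = M := by
  funext i c
  rw [Bool.eq_iff_iff, threshold, decide_eq_true_iff,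
    apply_eq_true_iff_lt_rowRank_add_colRank hM]

theorem Icc_subset_range_rowRank (hM : IsChain (· ⊆ ·) (Set.range (rowSupport M))) :
    Set.Icc 1 #(nonemptyRowSupports M) ⊆ Set.range (rowRank M) := by
  intro t ht
  have hchain : IsChain (· ≤ ·) (nonemptyRowSupports M : Set (Finset κ)) :=
    hM.mono fun S hS => (mem_nonemptyRowSupports.1 hS).2
  have ht' : t ∈ Icc 1 #(nonemptyRowSupports M) := mem_Icc.2 ht
  rw [← image_card_filter_le_eq_Icc hchain] at ht'
  obtain ⟨S, hS, rfl⟩ := mem_image.1 ht'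
  obtain ⟨-, i, rfl⟩ := mem_nonemptyRowSupports.1 hS
  exact ⟨i, rfl⟩

theorem Icc_subset_range_colRank (hM : IsChain (· ⊆ ·) (Set.range (rowSupport M))) :
    Set.Icc 1 #(nonemptyRowSupports M) ⊆ Set.range (colRank M) := by
  set k := #(nonemptyRowSupports M)
  set U := thresholdSupport k (colRank M)
  have hU : ∀ s ≤ k, #((nonemptyRowSupports M).filter (· ⊆ U s)) = s := by
    intro s hs
    rcases Nat.eq_zero_or_pos s with rfl | hpos
    · rw [show U 0 = ∅ from thresholdSupport_zero colRank_le, card_eq_zero, filter_eq_empty_iff]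
      exact fun S hS hS0 => (mem_nonemptyRowSupports.1 hS).1 (subset_empty.1 hS0)
    · obtain ⟨i, rfl⟩ := Icc_subset_range_rowRank hM ⟨hpos, hs⟩
      have hUi : U (rowRank M i) = rowSupport M i := by
        conv_rhs => rw [← threshold_rowRank_colRank hM, rowSupport_threshold]
      rw [hUi]
      rfl
  -- a value `t` missed by `colRank M` would make two consecutive levels of `U` coincide
  rintro t ⟨ht, htk⟩
  by_contra hmiss
  have hstep : U (k + 1 - t) = U (k - t) := by
    ext c
    have : colRank M c ≠ t := fun h => hmiss ⟨c, h⟩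
    simp only [U, thresholdSupport, mem_filter, mem_univ, true_and]
    omega
  have h₁ := hU (k + 1 - t) (by omega)
  rw [hstep, hU (k - t) (by omega)] at h₁
  omega

variable {k : ℕ} {f : ι → ℕ} {g : κ → ℕ}

theorem nonemptyRowSupports_threshold (hf : ∀ i, f i ≤ k) (hf' : Set.Icc 1 k ⊆ Set.range f)
    (hg : ∀ c, g c ≤ k) (hg' : Set.Icc 1 k ⊆ Set.range g) :
    nonemptyRowSupports (threshold k f g) = (Icc 1 k).image (thresholdSupport k g) := by
  ext S
  simp only [mem_nonemptyRowSupports, rowSupport_threshold, mem_image, mem_Icc]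
  constructor
  · rintro ⟨hS, i, rfl⟩
    refine ⟨f i, ⟨Nat.one_le_iff_ne_zero.2 fun h => hS ?_, hf i⟩, rfl⟩
    rw [h, thresholdSupport_zero hg]
  · rintro ⟨s, hs, rfl⟩
    obtain ⟨i, rfl⟩ := hf' hs
    refine ⟨fun h => ?_, i, rfl⟩
    have := strictMonoOn_thresholdSupport hg' (Set.mem_Iic.2 (Nat.zero_le k))
      (Set.mem_Iic.2 hs.2) hs.1
    rw [h, thresholdSupport_zero hg] at this
    exact this.ne rfl

variable (hf : ∀ i, f i ≤ k) (hf' : Set.Icc 1 k ⊆ Set.range f) (hg : ∀ c, g c ≤ k)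
  (hg' : Set.Icc 1 k ⊆ Set.range g)
include hf hf' hg hg'

theorem card_filter_nonemptyRowSupports_threshold (p : Finset κ → Prop) [DecidablePred p] :
    #((nonemptyRowSupports (threshold k f g)).filter p) =
      #((Icc 1 k).filter fun s => p (thresholdSupport k g s)) := by
  rw [nonemptyRowSupports_threshold hf hf' hg hg', filter_image,
    card_image_of_injOn ((strictMonoOn_thresholdSupport hg').injOn.mono _)]
  intro s hs
  exact Set.mem_Iic.2 (mem_Icc.1 (mem_filter.1 hs).1).2

theorem card_nonemptyRowSupports_threshold : #(nonemptyRowSupports (threshold k f g)) = k := by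
  simpa using card_filter_nonemptyRowSupports_threshold hf hf' hg hg' fun _ => True

theorem rowRank_threshold : rowRank (threshold k f g) = f := by
  funext i
  rw [rowRank, card_filter_nonemptyRowSupports_threshold hf hf' hg hg', rowSupport_threshold]
  have hle : ∀ s ∈ Icc 1 k, thresholdSupport k g s ⊆ thresholdSupport k g (f i) ↔ s ≤ f i :=
    fun s hs => (strictMonoOn_thresholdSupport hg').le_iff_le
      (Set.mem_Iic.2 (mem_Icc.1 hs).2) (Set.mem_Iic.2 (hf i))
  rw [filter_congr hle, show (Icc 1 k).filter (· ≤ f i) = Icc 1 (f i) by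
    ext s; simp only [mem_filter, mem_Icc]; have := hf i; omega]
  simp

theorem colRank_threshold : colRank (threshold k f g) = g := by
  funext c
  have := hg c
  rw [colRank, card_filter_nonemptyRowSupports_threshold hf hf' hg hg',
    show (Icc 1 k).filter (fun s => c ∈ thresholdSupport k g s) = Icc (k + 1 - g c) k by
      ext s; simp only [thresholdSupport, mem_filter, mem_univ, true_and, mem_Icc]; omega]
  simp only [Nat.card_Icc]
  omega

end BoolMatrix

section Lonesum

variable {m n : ℕ}

theorem rowSum_eq_of_apply_eq_comp {M N : Fin m → Fin n → Bool} {i : Fin m}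
    (σ : Equiv.Perm (Fin n)) (h : ∀ c, N i c = M i (σ c)) : rowSum N i = rowSum M i :=
  card_equiv σ fun c => by simp [h]

theorem colSum_eq_of_apply_eq_comp {M N : Fin m → Fin n → Bool} {c : Fin n}
    (σ : Equiv.Perm (Fin m)) (h : ∀ i, N i c = M (σ i) c) : colSum N c = colSum M c :=
  card_equiv σ fun i => by simp [h]

theorem cast_rowSum {R : Type*} [Semiring R] (M : Fin m → Fin n → Bool) (i : Fin m) :
    (rowSum M i : R) = ∑ c, if M i c = true then 1 else 0 := by
  rw [rowSum, card_filter, Nat.cast_sum]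
  simp only [Nat.cast_ite, Nat.cast_one, Nat.cast_zero]

theorem cast_colSum {R : Type*} [Semiring R] (M : Fin m → Fin n → Bool) (c : Fin n) :
    (colSum M c : R) = ∑ i, if M i c = true then 1 else 0 := by
  rw [colSum, card_filter, Nat.cast_sum]
  simp only [Nat.cast_ite, Nat.cast_one, Nat.cast_zero]

theorem isLonesum_of_potential {R : Type*} [CommRing R] [LinearOrder R] [IsStrictOrderedRing R]
    {M : Fin m → Fin n → Bool} (a : Fin m → R) (b : Fin n → R)
    (hpos : ∀ i c, M i c = true → 0 < a i + b c) (hneg : ∀ i c, M i c = false → a i + b c < 0) :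
    IsLonesum M := by
  intro N hrow hcol
  let χ : Bool → R := fun x => if x = true then 1 else 0
  let T : Fin m → Fin n → R := fun i c => (χ (M i c) - χ (N i c)) * (a i + b c)
  have hT : ∀ i c, 0 ≤ T i c ∧ (T i c = 0 → N i c = M i c) := by
    intro i c
    cases hM : M i c <;> cases hN : N i c <;> simp only [T, χ, hM, hN] <;>
      grind [hpos i c, hneg i c]
  have hsum : ∑ i, ∑ c, T i c = 0 := by
    simp only [T, mul_add, sum_add_distrib, ← sum_mul]
    rw [sum_comm (f := fun i c => (χ (M i c) - χ (N i c)) * b c)]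
    simp only [← sum_mul, sum_sub_distrib, χ, ← cast_rowSum, ← cast_colSum, hrow, hcol]
    simp
  funext i c
  refine (hT i c).2 ?_
  rw [sum_eq_zero_iff_of_nonneg fun i _ => sum_nonneg fun c _ => (hT i c).1] at hsum
  exact (sum_eq_zero_iff_of_nonneg fun c _ => (hT i c).1).1 (hsum i (mem_univ i)) c (mem_univ c)

theorem isLonesum_threshold (k : ℕ) (f : Fin m → ℕ) (g : Fin n → ℕ) :
    IsLonesum (threshold k f g) := by
  refine isLonesum_of_potential (R := ℚ) (fun i => f i) (fun c => g c - k - 1 / 2)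
    (fun i c h => ?_) (fun i c h => ?_)
  · have : (k : ℚ) + 1 ≤ f i + g c := by exact_mod_cast (decide_eq_true_iff.1 h)
    linarith
  · have : (f i : ℚ) + g c ≤ k := by exact_mod_cast not_lt.1 (decide_eq_false_iff_not.1 h)
    linarith

theorem isChain_rowSupport_of_isLonesum {M : Fin m → Fin n → Bool}
    (hM : IsLonesum M) : IsChain (· ⊆ ·) (Set.range (rowSupport M)) := by
  rintro _ ⟨i, rfl⟩ _ ⟨i', rfl⟩ -
  by_contra h
  rw [not_or] at h
  obtain ⟨c, hic, hi'c⟩ := not_subset.1 h.1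
  obtain ⟨c', hi'c', hic'⟩ := not_subset.1 h.2
  simp only [mem_rowSupport, Bool.not_eq_true] at hic hi'c hi'c' hic'
  have hii' : i ≠ i' := by rintro rfl; simp_all
  have hcc' : c ≠ c' := by rintro rfl; simp_all
  -- `N` is `M` with the `2 × 2` submatrix on rows `i, i'` and columns `c, c'` switched
  let N : Fin m → Fin n → Bool := fun x y =>
    if x = i ∨ x = i' then M x (Equiv.swap c c' y) else M x y
  have hrow : ∀ x, rowSum N x = rowSum M x := fun x =>
    rowSum_eq_of_apply_eq_comp (if x = i ∨ x = i' then Equiv.swap c c' else 1) fun y => by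
      by_cases hx : x = i ∨ x = i' <;> simp [N, hx]
  have hcol : ∀ y, colSum N y = colSum M y := fun y =>
    colSum_eq_of_apply_eq_comp (if y = c ∨ y = c' then Equiv.swap i i' else 1) fun x => by
      by_cases hy : y = c ∨ y = c'
      · rcases hy with rfl | rfl <;> by_cases hx : x = i <;> by_cases hx' : x = i' <;>
          simp_all [N, Equiv.swap_apply_of_ne_of_ne]
      · simp_all [N, Equiv.swap_apply_of_ne_of_ne]
  have := congrFun (congrFun (hM N hrow hcol) i) c
  simp_all [N]

theorem card_nonemptyRowSupports_le_of_isLonesum {M : Fin m → Fin n → Bool}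
    (hM : IsLonesum M) : #(nonemptyRowSupports M) ≤ min m n := by
  have hchain := isChain_rowSupport_of_isLonesum hM
  simpa using And.intro (le_card_of_Icc_subset_range (Icc_subset_range_rowRank hchain))
    (le_card_of_Icc_subset_range (Icc_subset_range_colRank hchain))

theorem card_isLonesum_card_nonemptyRowSupports_eq (j : ℕ) :
    Nat.card {M : Fin m → Fin n → Bool // IsLonesum M ∧ #(nonemptyRowSupports M) = j} =
      (j.factorial * stirling2 (m + 1) (j + 1)) * (j.factorial * stirling2 (n + 1) (j + 1)) := by
  let Hits (r : ℕ) := {f : Fin r → Fin (j + 1) // ∀ t, t ≠ 0 → t ∈ Set.range f}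
  have e : {M : Fin m → Fin n → Bool // IsLonesum M ∧ #(nonemptyRowSupports M) = j} ≃
      Hits m × Hits n :=
    { toFun M :=
        have hchain := isChain_rowSupport_of_isLonesum M.2.1
        (⟨fun i => ⟨rowRank M.1 i, Nat.lt_succ_of_le ((rowRank_le i).trans_eq M.2.2)⟩,
          (Icc_subset_range_val_iff _).1 fun t ht =>
            Icc_subset_range_rowRank hchain (by rwa [M.2.2])⟩,
         ⟨fun c => ⟨colRank M.1 c, Nat.lt_succ_of_le ((colRank_le c).trans_eq M.2.2)⟩,
          (Icc_subset_range_val_iff _).1 fun t ht =>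
            Icc_subset_range_colRank hchain (by rwa [M.2.2])⟩)
      invFun F :=
        ⟨threshold j (fun i => F.1.1 i) (fun c => F.2.1 c), isLonesum_threshold _ _ _,
          card_nonemptyRowSupports_threshold (fun i => Fin.is_le _)
            ((Icc_subset_range_val_iff _).2 F.1.2) (fun c => Fin.is_le _)
            ((Icc_subset_range_val_iff _).2 F.2.2)⟩
      left_inv := by
        rintro ⟨M, hM, rfl⟩
        exact Subtype.ext (threshold_rowRank_colRank (isChain_rowSupport_of_isLonesum hM))
      right_inv := by
        rintro ⟨⟨F, hF⟩, ⟨G, hG⟩⟩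
        have hF' := (Icc_subset_range_val_iff _).2 hF
        have hG' := (Icc_subset_range_val_iff _).2 hG
        have hrow := rowRank_threshold (fun i => Fin.is_le (F i)) hF' (fun c => Fin.is_le (G c)) hG'
        have hcol := colRank_threshold (fun i => Fin.is_le (F i)) hF' (fun c => Fin.is_le (G c)) hG'
        exact Prod.ext (Subtype.ext (funext fun i => Fin.ext (congrFun hrow i)))
          (Subtype.ext (funext fun c => Fin.ext (congrFun hcol c))) }
  rw [Nat.card_congr e, Nat.card_prod, card_forall_ne_zero_mem_range,
    card_forall_ne_zero_mem_range]

end Lonesum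

theorem card_lonesum_eq_general (n₁ n₂ : ℕ) :
    Nat.card {M : Fin n₁ → Fin n₂ → Bool // IsLonesum M} =
      ∑ j ∈ Finset.range (min n₁ n₂ + 1),
        (Nat.factorial j) ^ 2 * stirling2 (n₁ + 1) (j + 1) * stirling2 (n₂ + 1) (j + 1) := by
  classical
  have hmaps : ((univ.filter IsLonesum : Finset (Fin n₁ → Fin n₂ → Bool)) : Set _).MapsTo
      (fun M => #(nonemptyRowSupports M)) (range (min n₁ n₂ + 1)) := fun M hM =>
    mem_range.2 (Nat.lt_succ_of_le (card_nonemptyRowSupports_le_of_isLonesum (mem_filter.1 hM).2))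
  rw [Nat.card_eq_fintype_card, Fintype.card_subtype, card_eq_sum_card_fiberwise hmaps]
  refine sum_congr rfl fun j _ => ?_
  rw [filter_filter, ← Fintype.card_subtype, ← Nat.card_eq_fintype_card,
    card_isLonesum_card_nonemptyRowSupports_eq]
  ring

/-- The number of `n₁ × n₂` lonesum matrices is
`∑_{j=0}^{min(n₁,n₂)} (j!)² S(n₁+1,j+1) S(n₂+1,j+1)`. -/
theorem card_lonesum_eq (n₁ n₂ : ℕ) (h₁ : 1 ≤ n₁) (h₂ : 1 ≤ n₂) :
    Nat.card {M : Fin n₁ → Fin n₂ → Bool // IsLonesum M} =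
      ∑ j ∈ Finset.range (min n₁ n₂ + 1),
        (Nat.factorial j) ^ 2 * stirling2 (n₁ + 1) (j + 1) * stirling2 (n₂ + 1) (j + 1) :=
  card_lonesum_eq_general n₁ n₂
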